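/- Let c₃ ≠ 0. The vector fields v = z² ∂z + (2/c₃) ∂w and w̃ = z ∂z − w ∂w satisfy the commutation relation [w̃, v] = v, and v is a symmetry of the ODE (4 + 2c₃wz)w' + c₃z²w'² + z(2 + c₃wz)w'' = 0: for any ε ∈ ℝ and any solution w(z), the transformed function along the flow of v is again a solution. Equivalently, along the flow of v, (z, w) ↦ (z/(1 − εz), w + (2ε/c₃)), and if w solves the ODE on an interval avoiding 1/ε, then W(z) = w(z/(1+εz)) + (2ε/c₃) solves it. -/

import Mathlib

/-!
The flow of `z² ∂z` acts on `z` by the Möbius maps `z ↦ z / (1 + ε z)` (time `-ε`), and the map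
with `-ε` is the inverse. Since `w ↦ w + 2ε/c₃` shifts `c₃ w z` by exactly `2ε z`, the chain rule
turns the left-hand side of the ODE for the transformed function into `(1 + ε z)⁻²` times the
left-hand side for `w` at `z / (1 + ε z)`. Nothing is known about `w` near that point, so the
formula for the first derivative, needed on a whole neighbourhood, relies on the inverse map
rather than on differentiability of `w`.
-/

/-- Lie bracket of vector fields on ℝ² with coordinates `(z, w)`. -/
noncomputable def bracket2 (X Y : ℝ × ℝ → ℝ × ℝ) : ℝ × ℝ → ℝ × ℝ :=
  fun p => fderiv ℝ Y p (X p) - fderiv ℝ X p (Y p)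

/-- The reduced ODE `(4 + 2c₃wz)w' + c₃z²w'² + z(2 + c₃wz)w'' = 0` at the point `z`. -/
noncomputable def ODE212 (c₃ : ℝ) (w : ℝ → ℝ) (z : ℝ) : Prop :=
  (4 + 2 * c₃ * w z * z) * deriv w z + c₃ * z ^ 2 * (deriv w z) ^ 2
    + z * (2 + c₃ * w z * z) * deriv (deriv w) z = 0

open Filter Topology

theorem bracket2_scaling_field (k : ℝ) :
    bracket2 (fun p => (p.1, -p.2)) (fun p => (p.1 ^ 2, k)) = fun p => (p.1 ^ 2, k) := by
  funext p
  have hX : HasFDerivAt (fun p : ℝ × ℝ => (p.1, -p.2))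
      ((ContinuousLinearMap.fst ℝ ℝ ℝ).prod (-ContinuousLinearMap.snd ℝ ℝ ℝ)) p :=
    hasFDerivAt_fst.prodMk hasFDerivAt_snd.neg
  have hY : HasFDerivAt (fun p : ℝ × ℝ => (p.1 ^ 2, k))
      ((p.1 • ContinuousLinearMap.fst ℝ ℝ ℝ + p.1 • ContinuousLinearMap.fst ℝ ℝ ℝ).prod 0)
      p := by
    simp only [sq]
    exact (hasFDerivAt_fst.fun_mul hasFDerivAt_fst).prodMk (hasFDerivAt_const _ _)
  simp only [bracket2, hX.fderiv, hY.fderiv]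
  ext <;> simp; ring

section

variable {𝕜 F : Type*} [NontriviallyNormedField 𝕜] [NormedAddCommGroup F] [NormedSpace 𝕜 F]

/-- If `f` is not differentiable at `g x`, neither is `f ∘ g` at `x`, so both sides are the junk
value `0`. -/
theorem deriv_comp_of_eventually_rightInverse {f : 𝕜 → F} {g ψ : 𝕜 → 𝕜} {x g' : 𝕜}
    (hg : HasDerivAt g g' x) (hψ : DifferentiableAt 𝕜 ψ (g x)) (hψg : ψ (g x) = x)
    (hgψ : ∀ᶠ u in 𝓝 (g x), g (ψ u) = u) :
    deriv (f ∘ g) x = g' • deriv f (g x) := by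
  by_cases hf : DifferentiableAt 𝕜 f (g x)
  · exact (hf.hasDerivAt.scomp x hg).deriv
  · rw [deriv_zero_of_not_differentiableAt hf, smul_zero]
    refine deriv_zero_of_not_differentiableAt fun hfg => hf ?_
    rw [← hψg] at hfg
    exact (hfg.comp (g x) hψ).congr_of_eventuallyEq (hgψ.mono fun u hu => by simp [hu])

end

noncomputable def moebius (ε t : ℝ) : ℝ := t / (1 + ε * t)

theorem one_add_neg_mul_moebius {ε t : ℝ} (ht : 1 + ε * t ≠ 0) :
    1 + -ε * moebius ε t = (1 + ε * t)⁻¹ := by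
  refine eq_inv_of_mul_eq_one_left ?_
  rw [moebius, add_mul, mul_assoc, div_mul_cancel₀ _ ht]
  ring

theorem moebius_neg_moebius {ε t : ℝ} (ht : 1 + ε * t ≠ 0) : moebius (-ε) (moebius ε t) = t := by
  rw [moebius, one_add_neg_mul_moebius ht, moebius, div_inv_eq_mul, div_mul_cancel₀ _ ht]

theorem hasDerivAt_moebius {ε t : ℝ} (ht : 1 + ε * t ≠ 0) :
    HasDerivAt (moebius ε) ((1 + ε * t) ^ 2)⁻¹ t := by
  refine ((hasDerivAt_id' t).fun_div (((hasDerivAt_id' t).const_mul ε).const_add 1) ht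
    |>.congr_deriv ?_)
  field_simp
  ring

theorem deriv_comp_moebius (w : ℝ → ℝ) {ε t : ℝ} (ht : 1 + ε * t ≠ 0) :
    deriv (w ∘ moebius ε) t = deriv w (moebius ε t) * ((1 + ε * t) ^ 2)⁻¹ := by
  have hinv : 1 + -ε * moebius ε t ≠ 0 := by
    rw [one_add_neg_mul_moebius ht]
    exact inv_ne_zero ht
  have hright : ∀ᶠ u in 𝓝 (moebius ε t), moebius ε (moebius (-ε) u) = u := by
    have : ContinuousAt (fun u => 1 + -ε * u) (moebius ε t) := by fun_prop
    filter_upwards [this.eventually_ne hinv] with u hu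
    simpa using moebius_neg_moebius hu
  rw [deriv_comp_of_eventually_rightInverse (hasDerivAt_moebius ht)
    (hasDerivAt_moebius hinv).differentiableAt (moebius_neg_moebius ht) hright, smul_eq_mul,
    mul_comm]

theorem hasDerivAt_deriv_comp_moebius {w : ℝ → ℝ} {ε t : ℝ} (ht : 1 + ε * t ≠ 0)
    (hw : DifferentiableAt ℝ (deriv w) (moebius ε t)) :
    HasDerivAt (deriv (w ∘ moebius ε))
      ((deriv (deriv w) (moebius ε t) - 2 * ε * (1 + ε * t) * deriv w (moebius ε t))
        / (1 + ε * t) ^ 4) t := by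
  have hderiv : deriv (w ∘ moebius ε) =ᶠ[𝓝 t]
      fun s => deriv w (moebius ε s) * ((1 + ε * s) ^ 2)⁻¹ := by
    have : ContinuousAt (fun s => 1 + ε * s) t := by fun_prop
    filter_upwards [this.eventually_ne ht] with s hs
    exact deriv_comp_moebius w hs
  have hfactor : HasDerivAt (fun s => ((1 + ε * s) ^ 2)⁻¹)
      (-(2 * ε * (1 + ε * t)) / ((1 + ε * t) ^ 2) ^ 2) t := by
    refine ((((hasDerivAt_id' t).const_mul ε).const_add 1).fun_pow 2
      |>.fun_inv (pow_ne_zero 2 ht)).congr_deriv ?_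
    ring
  refine HasDerivAt.congr_of_eventuallyEq ?_ hderiv
  refine ((hw.hasDerivAt.comp t (hasDerivAt_moebius ht)).mul hfactor).congr_deriv ?_
  rw [Function.comp_apply]
  field_simp
  ring

def ode212Lhs (c₃ w w' w'' z : ℝ) : ℝ :=
  (4 + 2 * c₃ * w * z) * w' + c₃ * z ^ 2 * w' ^ 2 + z * (2 + c₃ * w * z) * w''

theorem ode212_iff {c₃ : ℝ} {w : ℝ → ℝ} {z : ℝ} :
    ODE212 c₃ w z ↔ ode212Lhs c₃ (w z) (deriv w z) (deriv (deriv w) z) z = 0 :=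
  Iff.rfl

theorem ode212Lhs_moebius {c₃ : ℝ} (hc : c₃ ≠ 0) {ε z : ℝ} (hz : 1 + ε * z ≠ 0) (w w' w'' : ℝ) :
    ode212Lhs c₃ (w + 2 * ε / c₃) (w' * ((1 + ε * z) ^ 2)⁻¹)
        ((w'' - 2 * ε * (1 + ε * z) * w') / (1 + ε * z) ^ 4) z
      = ode212Lhs c₃ w w' w'' (moebius ε z) / (1 + ε * z) ^ 2 := by
  unfold ode212Lhs moebius
  field_simp
  ring

theorem symmetry_L212_k0_one (c₃ : ℝ) (hc : c₃ ≠ 0) :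
    (bracket2 (fun p => (p.1, -p.2)) (fun p => (p.1 ^ 2, 2 / c₃))
        = fun p => (p.1 ^ 2, 2 / c₃)) ∧
      ∀ (ε : ℝ) (I : Set ℝ) (w : ℝ → ℝ),
        (∀ z ∈ I, DifferentiableAt ℝ w z ∧ DifferentiableAt ℝ (deriv w) z) →
        (∀ z ∈ I, ODE212 c₃ w z) →
        ∀ z : ℝ, 1 + ε * z ≠ 0 → z / (1 + ε * z) ∈ I →
          ODE212 c₃ (fun z' => w (z' / (1 + ε * z')) + 2 * ε / c₃) z := by
  refine ⟨bracket2_scaling_field _, fun ε I w hdiff hode z hz hmem => ?_⟩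
  show ODE212 c₃ (fun z' => (w ∘ moebius ε) z' + 2 * ε / c₃) z
  have hE : ODE212 c₃ w (moebius ε z) := hode _ hmem
  rw [ode212_iff, deriv_add_const', deriv_comp_moebius w hz,
    (hasDerivAt_deriv_comp_moebius hz (hdiff _ hmem).2).deriv, ode212Lhs_moebius hc hz,
    Function.comp_apply, ode212_iff.1 hE, zero_div]
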